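/- arXiv:2302.05557 — 4 statements merged into one kernel-verified Lean document; each statement's English description precedes it below -/
import Mathlib

section
/- If φ: ℕ^G → ℝ has summable variation according to an exhausting sequence {E_m} on a countable amenable group G, then V_F(φ)/|F| → 0 as F becomes more and more invariant; i.e., for every ε > 0 there exist a finite K ⊆ G and δ > 0 such that V_F(φ) ≤ ε|F| for every (K,δ)-invariant finite set F. -/
open scoped Pointwise symmDiff
open Filter MeasureTheory

variable {G : Type*} [Group G] [DecidableEq G]

/-- The (right) shift action of `G` on `ℕ^G`: `(g · x)(h) = x(hg)`. -/
def shift (g : G) (x : G → ℕ) : G → ℕ := fun h => x (h * g)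

/-- `φ_F(x) = Σ_{g ∈ F} φ(g · x)`. -/
noncomputable def phiSum (φ : (G → ℕ) → ℝ) (F : Finset G) (x : G → ℕ) : ℝ :=
  ∑ g ∈ F, φ (shift g x)

/-- The variation `δ_E(φ) = sup {|φ(x) - φ(y)| : x_E = y_E}`. -/
noncomputable def pvar (φ : (G → ℕ) → ℝ) (E : Set G) : ℝ :=
  sSup {d | ∃ x y : G → ℕ, (∀ g ∈ E, x g = y g) ∧ d = |φ x - φ y|}

/-- An exhausting sequence for `G`. -/
structure IsExhaustion (E : ℕ → Finset G) : Prop where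
  empty : E 0 = ∅
  one_mem : (1 : G) ∈ E 1
  mono : ∀ m, E m ⊆ E (m + 1)
  exhaust : ∀ g : G, ∃ m, g ∈ E m

/-- The `m`-th term (reindexed from `m ≥ 1`) of the `F`-sum of variations
`V_F(φ) = Σ_{m ≥ 1} |E_{m+1}⁻¹ F \ E_m⁻¹ F| · δ_{E_m}(φ)`. -/
noncomputable def vterm (φ : (G → ℕ) → ℝ) (E : ℕ → Finset G) (F : Finset G) (m : ℕ) : ℝ :=
  ((((E (m + 2))⁻¹ * F) \ ((E (m + 1))⁻¹ * F)).card : ℝ) *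
    pvar φ ((E (m + 1) : Finset G) : Set G)

/-- The `F`-sum of variations `V_F(φ)` (according to the exhausting sequence `E`). -/
noncomputable def VF (φ : (G → ℕ) → ℝ) (E : ℕ → Finset G) (F : Finset G) : ℝ :=
  ∑' m : ℕ, vterm φ E F m

/-- Finiteness of the `F`-sum of variations. -/
def SummableVarF (φ : (G → ℕ) → ℝ) (E : ℕ → Finset G) (F : Finset G) : Prop :=
  Summable (vterm φ E F)

/-- `φ` has summable variation according to `E`: `V(φ) = V_{{1}}(φ) < ∞`. -/
def SummableVariation (φ : (G → ℕ) → ℝ) (E : ℕ → Finset G) : Prop :=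
  SummableVarF φ E {1}

/-- `F` is `(K, δ)`-invariant: `|KF △ F| < δ |F|`. -/
def FInv (K : Finset G) (δ : ℝ) (F : Finset G) : Prop :=
  (((K * F) ∆ F).card : ℝ) < δ * F.card

/-- `G` is amenable: `(K,δ)`-invariant nonempty finite sets exist for all `K, δ`. -/
def Amen : Prop :=
  ∀ (K : Finset G) (δ : ℝ), 0 < δ → ∃ F : Finset G, F.Nonempty ∧ FInv K δ F

/-- `sup φ_F([w])` for a pattern `w` on `F` (countable alphabet `ℕ`). -/
noncomputable def cylSup (φ : (G → ℕ) → ℝ) (F : Finset G) (w : ↥F → ℕ) : ℝ :=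
  sSup {r | ∃ x : G → ℕ, (∀ g : ↥F, x g = w g) ∧ r = phiSum φ F x}

/-- The partition function `Z_F(φ) = Σ_{w ∈ ℕ^F} exp (sup φ_F([w]))`. -/
noncomputable def ZF (φ : (G → ℕ) → ℝ) (F : Finset G) : ℝ :=
  ∑' w : ↥F → ℕ, Real.exp (cylSup φ F w)

/-- `sup φ_F([w] ∩ A^G)` for a pattern `w` on `F` restricted to a finite alphabet `A`. -/
noncomputable def cylSupA (φ : (G → ℕ) → ℝ) (A : Finset ℕ) (F : Finset G) (w : ↥F → ℕ) : ℝ :=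
  sSup {r | ∃ x : G → ℕ, (∀ g : G, x g ∈ A) ∧ (∀ g : ↥F, x g = w g) ∧ r = phiSum φ F x}

/-- The finite-alphabet partition function `Z_F(A, φ)`. -/
noncomputable def ZFA (φ : (G → ℕ) → ℝ) (A : Finset ℕ) (F : Finset G) : ℝ :=
  ∑ w : ↥F → ↥A, Real.exp (cylSupA φ A F (fun g => (w g : ℕ)))

/-- `φ` is exp-summable: `Z_{1_G}(φ) = Σ_a exp (sup φ([a])) < ∞`. -/
def ExpSummable (φ : (G → ℕ) → ℝ) : Prop :=
  Summable (fun a : ℕ => Real.exp (sSup {r | ∃ x : G → ℕ, x 1 = a ∧ r = φ x}))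

/-- Coordinate-wise application of a family of permutations of `ℕ`. -/
def permApp (σ : G → Equiv.Perm ℕ) (x : G → ℕ) : G → ℕ := fun g => σ g (x g)

/-- The family `σ` is supported on `K`. -/
def SupportedOn (σ : G → Equiv.Perm ℕ) (K : Finset G) : Prop := ∀ g ∉ K, σ g = 1

/-- `φ_F^τ = φ_F ∘ τ⁻¹ - φ_F` for the coordinate-wise permutation `τ` given by `σ`. -/
noncomputable def phiTau (φ : (G → ℕ) → ℝ) (F : Finset G) (σ : G → Equiv.Perm ℕ)
    (x : G → ℕ) : ℝ :=
  phiSum φ F (permApp (fun g => (σ g)⁻¹) x) - phiSum φ F x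

/-- The family of the translated permutation `g · τ = τ_{K g⁻¹}`. -/
def transPerm (σ : G → Equiv.Perm ℕ) (g : G) : G → Equiv.Perm ℕ := fun h => σ (h * g)

/-- Replace a configuration by the pattern `w` on `K`. -/
def patch (K : Finset G) (w x : G → ℕ) : G → ℕ := fun g => if g ∈ K then w g else x g

/-- The involution `τ_{w,v}` exchanging the patterns `w` and `v` on `K`. -/
def swapKV (K : Finset G) (w v x : G → ℕ) : G → ℕ :=
  if ∀ g ∈ K, x g = w g then patch K v x
  else if ∀ g ∈ K, x g = v g then patch K w x
  else x

/-- Extension of a `K`-pattern to a full configuration (by `0` off `K`). -/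
def extK (K : Finset G) (v : ↥K → ℕ) : G → ℕ :=
  fun g => if h : g ∈ K then v ⟨g, h⟩ else 0

/-- The cylinder of configurations agreeing with `x` on `F`. -/
def cylEvent (F : Finset G) (x : G → ℕ) : Set (G → ℕ) := {y | ∀ g ∈ F, y g = x g}

/-- The cylinder of configurations realizing the `F`-pattern `w`. -/
def cylPat (F : Finset G) (w : ↥F → ℕ) : Set (G → ℕ) := {x | ∀ g : ↥F, x g = w g}

/-- `μ` is a Bowen-Gibbs measure for `φ` with constant `p`. -/
def IsBowenGibbs (φ : (G → ℕ) → ℝ) (μ : Measure (G → ℕ)) (p : ℝ) : Prop :=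
  ∀ ε : ℝ, 0 < ε → ∃ (K : Finset G) (δ : ℝ), 0 < δ ∧
    ∀ F : Finset G, F.Nonempty → FInv K δ F → ∀ x : G → ℕ,
      Real.exp (-(ε * F.card)) ≤
          (μ (cylEvent F x)).toReal / Real.exp (phiSum φ F x - p * F.card) ∧
      (μ (cylEvent F x)).toReal / Real.exp (phiSum φ F x - p * F.card) ≤
          Real.exp (ε * F.card)

/-- The Shannon entropy `H_F(μ)` of the `F`-refinement of the canonical partition. -/
noncomputable def HFent (μ : Measure (G → ℕ)) (F : Finset G) : ℝ :=
  ∑' w : ↥F → ℕ, Real.negMulLog ((μ (cylPat F w)).toReal)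

omit [Group G] [DecidableEq G] in
lemma pvar_nonneg (φ : (G → ℕ) → ℝ) (E : Set G) : 0 ≤ pvar φ E :=
  Real.sSup_nonneg fun _ ⟨_, _, _, hd⟩ => hd ▸ abs_nonneg _

lemma diff_mul_subset (A B F : Finset G) :
    ((A⁻¹ * F) \ (B⁻¹ * F)) ⊆ (A⁻¹ \ B⁻¹) * F := by
  intro g hg
  rw [Finset.mem_sdiff] at hg
  obtain ⟨hg1, hg2⟩ := hg
  rw [Finset.mem_mul] at hg1
  obtain ⟨a, ha, f, hf, rfl⟩ := hg1
  refine Finset.mul_mem_mul ?_ hf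
  rw [Finset.mem_sdiff]
  exact ⟨ha, fun hb => hg2 (Finset.mul_mem_mul hb hf)⟩

lemma vterm_one_eq (φ : (G → ℕ) → ℝ) (E : ℕ → Finset G) (m : ℕ) :
    vterm φ E {1} m =
      ((((E (m + 2))⁻¹ \ (E (m + 1))⁻¹).card : ℝ)) * pvar φ ((E (m + 1) : Finset G) : Set G) := by
  have h1 : ∀ s : Finset G, s * {1} = s := fun s => by
    have : ({1} : Finset G) = (1 : Finset G) := rfl
    rw [this, mul_one]
  simp only [vterm, h1]

lemma vterm_nonneg (φ : (G → ℕ) → ℝ) (E : ℕ → Finset G) (F : Finset G) (m : ℕ) :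
    0 ≤ vterm φ E F m :=
  mul_nonneg (Nat.cast_nonneg _) (pvar_nonneg _ _)

lemma vterm_le_card_mul (φ : (G → ℕ) → ℝ) (E : ℕ → Finset G) (F : Finset G) (m : ℕ) :
    vterm φ E F m ≤ (F.card : ℝ) * vterm φ E {1} m := by
  rw [vterm_one_eq]
  have hc : (((((E (m + 2))⁻¹ * F) \ ((E (m + 1))⁻¹ * F)).card : ℝ)) ≤
      (((E (m + 2))⁻¹ \ (E (m + 1))⁻¹).card : ℝ) * (F.card : ℝ) := by
    have := (Finset.card_le_card (diff_mul_subset (E (m + 2)) (E (m + 1)) F)).trans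
      Finset.card_mul_le
    exact_mod_cast this
  calc vterm φ E F m ≤ ((((E (m + 2))⁻¹ \ (E (m + 1))⁻¹).card : ℝ) * (F.card : ℝ)) *
        pvar φ ((E (m + 1) : Finset G) : Set G) :=
      mul_le_mul_of_nonneg_right hc (pvar_nonneg _ _)
    _ = _ := by ring


/-- under summable variation, `V_F(φ)/|F| → 0` as `F` becomes more and
more invariant. -/
theorem VF_div_card_tendsto_zero
    (φ : (G → ℕ) → ℝ) (E : ℕ → Finset G) (hE : IsExhaustion E)
    (hG : Amen (G := G)) (h : SummableVariation φ E) :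
    ∀ ε : ℝ, 0 < ε → ∃ (K : Finset G) (δ : ℝ), 0 < δ ∧
      ∀ F : Finset G, F.Nonempty → FInv K δ F → VF φ E F ≤ ε * F.card := by
  intro ε hε
  have hmono : Monotone E := monotone_nat_of_le_succ hE.mono
  -- choose M with small tail
  obtain ⟨M, hM⟩ : ∃ M : ℕ, ∑' m : ℕ, vterm φ E {1} (m + M) < ε / 2 :=
    ((tendsto_sum_nat_add (vterm φ E {1})).eventually (gt_mem_nhds (half_pos hε))).exists
  set C : ℝ := 1 + ∑ m ∈ Finset.range M, pvar φ ((E (m + 1) : Finset G) : Set G) with hC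
  have hCpos : 0 < C := by
    have : 0 ≤ ∑ m ∈ Finset.range M, pvar φ ((E (m + 1) : Finset G) : Set G) :=
      Finset.sum_nonneg fun m _ => pvar_nonneg _ _
    linarith
  refine ⟨(E (M + 1))⁻¹, ε / (2 * C), by positivity, ?_⟩
  intro F hF hI
  have hFc : (0 : ℝ) ≤ (F.card : ℝ) := Nat.cast_nonneg _
  have hsumF : Summable (vterm φ E F) :=
    Summable.of_nonneg_of_le (vterm_nonneg φ E F) (vterm_le_card_mul φ E F)
      (h.mul_left (F.card : ℝ))
  -- head bound
  have hhead : ∀ m ∈ Finset.range M,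
      vterm φ E F m ≤ ((((E (M + 1))⁻¹ * F) ∆ F).card : ℝ) *
        pvar φ ((E (m + 1) : Finset G) : Set G) := by
    intro m hm
    rw [Finset.mem_range] at hm
    have hsub : (((E (m + 2))⁻¹ * F) \ ((E (m + 1))⁻¹ * F)) ⊆ ((E (M + 1))⁻¹ * F) ∆ F := by
      intro g hg
      rw [Finset.mem_sdiff] at hg
      obtain ⟨hg1, hg2⟩ := hg
      have hgK : g ∈ (E (M + 1))⁻¹ * F :=
        Finset.mul_subset_mul_right (Finset.inv_subset_inv (hmono (by omega))) hg1
      have hgF : g ∉ F := fun hgF => hg2 (Finset.subset_mul_right F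
        (by simpa using Finset.inv_mem_inv (hmono (Nat.le_add_left 1 m) hE.one_mem)) hgF)
      exact Finset.mem_union_left _ (Finset.mem_sdiff.mpr ⟨hgK, hgF⟩)
    exact mul_le_mul_of_nonneg_right
      (by exact_mod_cast Finset.card_le_card hsub) (pvar_nonneg _ _)
  have hhead2 : ∑ m ∈ Finset.range M, vterm φ E F m ≤ ε / 2 * F.card := by
    calc ∑ m ∈ Finset.range M, vterm φ E F m
        ≤ ∑ m ∈ Finset.range M, ((((E (M + 1))⁻¹ * F) ∆ F).card : ℝ) *
            pvar φ ((E (m + 1) : Finset G) : Set G) := Finset.sum_le_sum hhead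
      _ = ((((E (M + 1))⁻¹ * F) ∆ F).card : ℝ) *
            ∑ m ∈ Finset.range M, pvar φ ((E (m + 1) : Finset G) : Set G) := by
          rw [Finset.mul_sum]
      _ ≤ ((((E (M + 1))⁻¹ * F) ∆ F).card : ℝ) * C := by
          refine mul_le_mul_of_nonneg_left (by simp [hC]) (Nat.cast_nonneg _)
      _ ≤ (ε / (2 * C) * F.card) * C :=
          mul_le_mul_of_nonneg_right (le_of_lt hI) (le_of_lt hCpos)
      _ = ε / 2 * F.card := by field_simp
  -- tail bound
  have htail : ∑' m : ℕ, vterm φ E F (m + M) ≤ ε / 2 * F.card := by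
    have h1 : Summable (fun m => vterm φ E F (m + M)) := (summable_nat_add_iff M).mpr hsumF
    have h2 : Summable (fun m => (F.card : ℝ) * vterm φ E {1} (m + M)) :=
      (summable_nat_add_iff M).mpr (h.mul_left (F.card : ℝ))
    calc ∑' m : ℕ, vterm φ E F (m + M)
        ≤ ∑' m : ℕ, (F.card : ℝ) * vterm φ E {1} (m + M) :=
          Summable.tsum_le_tsum (fun m => vterm_le_card_mul φ E F (m + M)) h1 h2
      _ = (F.card : ℝ) * ∑' m : ℕ, vterm φ E {1} (m + M) := tsum_mul_left
      _ ≤ (F.card : ℝ) * (ε / 2) := mul_le_mul_of_nonneg_left (le_of_lt hM) hFc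
      _ = ε / 2 * F.card := by ring
  have hsplit : VF φ E F = ∑ m ∈ Finset.range M, vterm φ E F m +
      ∑' m : ℕ, vterm φ E F (m + M) := (Summable.sum_add_tsum_nat_add M hsumF).symm
  rw [hsplit]
  linarith
end

section
/- Let φ: ℕ^G → ℝ have finite oscillation (δ(φ) := δ_{{1_G}}(φ) < ∞) and satisfy liminf_{m→∞} δ_{E_m}(φ) = 0 for some exhausting sequence {E_m}. Then Δ_F(φ)/|F| → 0 as F becomes more and more invariant, where Δ_F(φ) = δ_F(φ_F) and φ_F(x) = Σ_{g∈F} φ(g·x). -/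
open scoped Pointwise symmDiff
open Filter MeasureTheory

variable {G : Type*} [Group G] [DecidableEq G]

/-- finite oscillation and `liminf δ_{E_m}(φ) = 0` imply
`Δ_F(φ)/|F| → 0` as `F` becomes more and more invariant, where `Δ_F(φ) = δ_F(φ_F)`. -/
theorem DeltaF_div_card_tendsto_zero
    (φ : (G → ℕ) → ℝ) (E : ℕ → Finset G) (hE : IsExhaustion E)
    (hG : Amen (G := G))
    (hosc : BddAbove {d | ∃ x y : G → ℕ, x 1 = y 1 ∧ d = |φ x - φ y|})
    (hliminf : Filter.liminf (fun m => pvar φ ((E m : Finset G) : Set G)) atTop = 0) :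
    ∀ ε : ℝ, 0 < ε → ∃ (K : Finset G) (δ : ℝ), 0 < δ ∧
      ∀ F : Finset G, F.Nonempty → FInv K δ F →
        pvar (phiSum φ F) (F : Set G) < ε * F.card := by
  classical
  intro ε hε
  set S1 : Set ℝ := {d | ∃ x y : G → ℕ, x 1 = y 1 ∧ d = |φ x - φ y|} with hS1
  have h0S1 : (0 : ℝ) ∈ S1 := ⟨(fun _ => 0), (fun _ => 0), rfl, by simp⟩
  set B : ℝ := sSup S1 with hBdef
  have hB0 : 0 ≤ B := le_csSup hosc h0S1
  -- monotonicity of the exhaustion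
  have hEmono : Monotone E := monotone_nat_of_le_succ hE.mono
  have h1mem : ∀ m : ℕ, 1 ≤ m → (1 : G) ∈ E m := fun m hm => hEmono hm hE.one_mem
  -- for m ≥ 1, the pvar set is contained in S1, hence bounded and its sup ≤ B
  have hsub : ∀ m : ℕ, 1 ≤ m →
      {d | ∃ x y : G → ℕ, (∀ g ∈ ((E m : Finset G) : Set G), x g = y g) ∧ d = |φ x - φ y|}
        ⊆ S1 := by
    rintro m hm d ⟨x, y, hxy, rfl⟩
    exact ⟨x, y, hxy 1 (by exact_mod_cast h1mem m hm), rfl⟩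
  have hbddm : ∀ m : ℕ, 1 ≤ m → BddAbove
      {d | ∃ x y : G → ℕ, (∀ g ∈ ((E m : Finset G) : Set G), x g = y g) ∧ d = |φ x - φ y|} :=
    fun m hm => hosc.mono (hsub m hm)
  have hpvar_le_B : ∀ m : ℕ, 1 ≤ m → pvar φ ((E m : Finset G) : Set G) ≤ B := by
    intro m hm
    exact Real.sSup_le (fun d hd => le_csSup hosc (hsub m hm hd)) hB0
  -- find m ≥ 1 with pvar φ (E m) < ε/2
  have hcobdd : Filter.IsCoboundedUnder (· ≥ ·) atTop
      (fun m => pvar φ ((E m : Finset G) : Set G)) := by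
    refine Filter.isCoboundedUnder_ge_of_eventually_le atTop (x := B) ?_
    filter_upwards [eventually_ge_atTop 1] with m hm using hpvar_le_B m hm
  have hfreq : ∃ᶠ m in atTop, pvar φ ((E m : Finset G) : Set G) < ε / 2 :=
    Filter.frequently_lt_of_liminf_lt hcobdd (by rw [hliminf]; positivity)
  obtain ⟨m, hmP, hm1⟩ := (hfreq.and_eventually (eventually_ge_atTop 1)).exists
  set K : Finset G := E m with hKdef
  have hKcard : 0 < (K.card : ℝ) := by
    have : (1 : G) ∈ K := h1mem m hm1
    exact_mod_cast Finset.card_pos.mpr ⟨1, this⟩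
  set P : ℝ := pvar φ ((E m : Finset G) : Set G) with hPdef
  have hP0 : 0 ≤ P := by
    refine le_csSup (hbddm m hm1) ?_
    exact ⟨(fun _ => 0), (fun _ => 0), fun _ _ => rfl, by simp⟩
  have hc : 0 < (K.card : ℝ) * (B + 1) := by positivity
  refine ⟨K, ε / (2 * ((K.card : ℝ) * (B + 1))), by positivity, ?_⟩
  set δ : ℝ := ε / (2 * ((K.card : ℝ) * (B + 1))) with hδdef
  have hcδ : (K.card : ℝ) * (B + 1) * δ = ε / 2 := by
    rw [hδdef]; field_simp
  intro F hF hFinv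
  set D : Finset G := (K * F) ∆ F with hDdef
  have hD : (D.card : ℝ) < δ * F.card := hFinv
  set bad : Finset G := F.filter (fun g => ¬ ∀ k ∈ K, k * g ∈ F) with hbaddef
  have hbadcard : (bad.card : ℝ) ≤ (K.card : ℝ) * D.card := by
    have hsubbad : bad ⊆ K⁻¹ * D := by
      intro g hg
      rw [hbaddef, Finset.mem_filter] at hg
      obtain ⟨hgF, hgb⟩ := hg
      push_neg at hgb
      obtain ⟨k, hk, hkg⟩ := hgb
      have hkgD : k * g ∈ D := by
        rw [hDdef, Finset.mem_symmDiff]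
        exact Or.inl ⟨Finset.mul_mem_mul hk hgF, hkg⟩
      have : k⁻¹ * (k * g) ∈ K⁻¹ * D :=
        Finset.mul_mem_mul (Finset.inv_mem_inv hk) hkgD
      simpa using this
    calc (bad.card : ℝ) ≤ ((K⁻¹ * D).card : ℝ) := by
            exact_mod_cast Finset.card_le_card hsubbad
      _ ≤ ((K⁻¹.card * D.card : ℕ) : ℝ) := by exact_mod_cast Finset.card_mul_le
      _ = (K.card : ℝ) * D.card := by rw [Finset.card_inv]; push_cast; ring
  have hFcard : 0 < (F.card : ℝ) := by exact_mod_cast Finset.card_pos.mpr hF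
  -- bound each element of the pvar set
  have hpair : ∀ x y : G → ℕ, (∀ g ∈ (F : Set G), x g = y g) →
      |phiSum φ F x - phiSum φ F y| ≤ (F.card : ℝ) * P + (bad.card : ℝ) * (B + 1) := by
    intro x y hxy
    have hxy' : ∀ g ∈ F, x g = y g := fun g hg => hxy g (by exact_mod_cast hg)
    have hsplit : phiSum φ F x - phiSum φ F y
        = ∑ g ∈ F, (φ (shift g x) - φ (shift g y)) := by
      rw [phiSum, phiSum, Finset.sum_sub_distrib]
    rw [hsplit]
    refine (Finset.abs_sum_le_sum_abs _ _).trans ?_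
    have hdec : ∑ g ∈ F, |φ (shift g x) - φ (shift g y)|
        = ∑ g ∈ F.filter (fun g => ∀ k ∈ K, k * g ∈ F), |φ (shift g x) - φ (shift g y)|
          + ∑ g ∈ bad, |φ (shift g x) - φ (shift g y)| := by
      rw [hbaddef, Finset.sum_filter_add_sum_filter_not]
    rw [hdec]
    have hgoodsum : ∑ g ∈ F.filter (fun g => ∀ k ∈ K, k * g ∈ F),
        |φ (shift g x) - φ (shift g y)| ≤ (F.card : ℝ) * P := by
      have h1 : ∀ g ∈ F.filter (fun g => ∀ k ∈ K, k * g ∈ F),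
          |φ (shift g x) - φ (shift g y)| ≤ P := by
        intro g hg
        rw [Finset.mem_filter] at hg
        refine le_csSup (hbddm m hm1) ⟨shift g x, shift g y, ?_, rfl⟩
        intro k hk
        have hkK : k ∈ K := by exact_mod_cast hk
        exact hxy' (k * g) (hg.2 k hkK)
      calc ∑ g ∈ F.filter (fun g => ∀ k ∈ K, k * g ∈ F), |φ (shift g x) - φ (shift g y)|
          ≤ ∑ _g ∈ F.filter (fun g => ∀ k ∈ K, k * g ∈ F), P := Finset.sum_le_sum h1
        _ = ((F.filter (fun g => ∀ k ∈ K, k * g ∈ F)).card : ℝ) * P := by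
            rw [Finset.sum_const, nsmul_eq_mul]
        _ ≤ (F.card : ℝ) * P := by
            apply mul_le_mul_of_nonneg_right _ hP0
            exact_mod_cast Finset.card_le_card (Finset.filter_subset _ _)
    have hbadsum : ∑ g ∈ bad, |φ (shift g x) - φ (shift g y)|
        ≤ (bad.card : ℝ) * (B + 1) := by
      have h1 : ∀ g ∈ bad, |φ (shift g x) - φ (shift g y)| ≤ B := by
        intro g hg
        have hgF : g ∈ F := Finset.mem_of_mem_filter g hg
        refine le_csSup hosc ⟨shift g x, shift g y, ?_, rfl⟩
        show x (1 * g) = y (1 * g)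
        rw [one_mul]; exact hxy' g hgF
      calc ∑ g ∈ bad, |φ (shift g x) - φ (shift g y)|
          ≤ ∑ _g ∈ bad, B := Finset.sum_le_sum h1
        _ = (bad.card : ℝ) * B := by rw [Finset.sum_const, nsmul_eq_mul]
        _ ≤ (bad.card : ℝ) * (B + 1) := by
            apply mul_le_mul_of_nonneg_left (by linarith) (by positivity)
    linarith
  have hCpos : 0 ≤ (F.card : ℝ) * P + (bad.card : ℝ) * (B + 1) := by positivity
  have hle : pvar (phiSum φ F) (F : Set G)
      ≤ (F.card : ℝ) * P + (bad.card : ℝ) * (B + 1) := by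
    refine Real.sSup_le ?_ hCpos
    rintro d ⟨x, y, hxy, rfl⟩
    exact hpair x y hxy
  refine hle.trans_lt ?_
  have h1 : (F.card : ℝ) * P ≤ (F.card : ℝ) * (ε / 2) :=
    mul_le_mul_of_nonneg_left (le_of_lt hmP) (le_of_lt hFcard)
  have h2 : (bad.card : ℝ) * (B + 1) < (ε / 2) * F.card := by
    calc (bad.card : ℝ) * (B + 1) ≤ ((K.card : ℝ) * D.card) * (B + 1) := by
          apply mul_le_mul_of_nonneg_right hbadcard (by positivity)
      _ < ((K.card : ℝ) * (δ * F.card)) * (B + 1) := by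
          have := hD
          have hKB : 0 < (K.card : ℝ) * (B + 1) := hc
          nlinarith
      _ = ((K.card : ℝ) * (B + 1) * δ) * F.card := by ring
      _ = (ε / 2) * F.card := by rw [hcδ]
  nlinarith
end

section
/- For a continuous potential φ: ℕ^G → ℝ on a countable amenable group G and any finite alphabet A ⊆ ℕ, the pressure p(A,φ) = lim_{F→G} (1/|F|) log Z_F(A,φ) exists (as a limit over sets becoming more and more invariant) and equals inf over nonempty finite E ⊆ G of (1/|E|) log Z_E(A,φ) (the infimum rule). -/
open scoped Pointwise symmDiff
open Filter MeasureTheory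

variable {G : Type*} [Group G] [DecidableEq G]

/-!
The function `F ↦ log Z_F(A, φ)` is right-invariant, bounded by a multiple of `|F|` (a continuous
`φ` is bounded on the compact set `A^G`), and satisfies Shearer's inequality
`log Z_F ≤ ∑ c, p c * log Z_{S c}` for every fractional cover `(S c, p c)` of `F`: the summand
of `Z_F` is bounded by `∏ c, (summand of Z_{S c}) ^ p c`, and Finner's generalised Hölder inequality
for counting measure on `A` sums this bound. Covering `F` by the translates `E c ∩ F`,
`c ∈ E⁻¹ F`, with weight `1 / |E|` gives
`log Z_F / |F| ≤ log Z_E / |E| + O(|E E⁻¹ F \ F| / |F|)`, so for `F` sufficiently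
`(E E⁻¹)`-invariant, `log Z_F / |F|` lies between the infimum and `log Z_E / |E|` up to `ε`,
for any `E` which nearly attains the infimum.
-/

open Finset Function
open scoped ENNReal

section FractionalCover

variable {ι κ : Type*} [DecidableEq ι]

structure IsFractionalCover (I : Finset κ) (S : κ → Finset ι) (p : κ → ℝ) (T : Finset ι) :
    Prop where
  nonneg : ∀ c ∈ I, 0 ≤ p c
  subset : ∀ c ∈ I, S c ⊆ T
  sum_eq_one : ∀ i ∈ T, ∑ c ∈ I with i ∈ S c, p c = 1

variable {I : Finset κ} {S : κ → Finset ι} {p : κ → ℝ} {T : Finset ι}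

lemma IsFractionalCover.erase {i : ι} (h : IsFractionalCover I S p (insert i T)) (hi : i ∉ T) :
    IsFractionalCover I (fun c => (S c).erase i) p T where
  nonneg := h.nonneg
  subset c hc j hj := by
    have := h.subset c hc (mem_of_mem_erase hj)
    grind
  sum_eq_one j hj := by
    have hji : j ≠ i := by grind
    simpa only [mem_erase, hji, ne_eq, not_false_eq_true, true_and] using
      h.sum_eq_one j (mem_insert_of_mem hj)

lemma IsFractionalCover.sum_eq (h : IsFractionalCover I S p T) (u : ι → ℝ) :
    ∑ i ∈ T, u i = ∑ c ∈ I, p c * ∑ i ∈ S c, u i := by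
  calc ∑ i ∈ T, u i = ∑ i ∈ T, (∑ c ∈ I with i ∈ S c, p c) * u i :=
        sum_congr rfl fun i hi => by rw [h.sum_eq_one i hi, one_mul]
    _ = ∑ c ∈ I, ∑ i ∈ T with i ∈ S c, p c * u i := by
        simp only [sum_filter, sum_mul, ite_mul, zero_mul]
        exact sum_comm
    _ = ∑ c ∈ I, p c * ∑ i ∈ S c, u i := by
        refine sum_congr rfl fun c hc => ?_
        rw [mul_sum, filter_mem_eq_inter, inter_eq_right.mpr (h.subset c hc)]

end FractionalCover

section Finner

variable {ι κ : Type*} [DecidableEq ι] {X : ι → Type*} [∀ i, MeasurableSpace (X i)]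
  {μ : ∀ i, Measure (X i)} {I : Finset κ} {S : κ → Finset ι} {p : κ → ℝ}
  {f : κ → (∀ i, X i) → ℝ≥0∞}

lemma lintegral_prod_update_rpow_le {i : ι} (hp : ∀ c ∈ I, 0 ≤ p c)
    (hsum : ∑ c ∈ I with i ∈ S c, p c = 1) (hf : ∀ c ∈ I, Measurable (f c))
    (hdep : ∀ c ∈ I, DependsOn (f c) (S c)) (x : ∀ i, X i) :
    ∫⁻ t, ∏ c ∈ I, f c (update x i t) ^ p c ∂μ i ≤
      ∏ c ∈ I, (if i ∈ S c then ∫⁻ t, f c (update x i t) ∂μ i else f c x) ^ p c := by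
  have hfix : ∀ c ∈ I, i ∉ S c → ∀ t, f c (update x i t) = f c x := fun c hc hi t =>
    hdep c hc fun j hj => update_of_ne (by grind) t x
  calc ∫⁻ t, ∏ c ∈ I, f c (update x i t) ^ p c ∂μ i
      = ∫⁻ t, (∏ c ∈ I with i ∈ S c, f c (update x i t) ^ p c) *
          ∏ c ∈ I with i ∉ S c, f c x ^ p c ∂μ i := by
        refine lintegral_congr fun t => ?_
        rw [← prod_filter_mul_prod_filter_not I (fun c => i ∈ S c)]
        congr 1
        exact prod_congr rfl fun c hc => by rw [hfix c (mem_filter.mp hc).1 (mem_filter.mp hc).2 t]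
    _ = (∫⁻ t, ∏ c ∈ I with i ∈ S c, f c (update x i t) ^ p c ∂μ i) *
          ∏ c ∈ I with i ∉ S c, f c x ^ p c :=
        lintegral_mul_const _ <| Finset.measurable_prod _ fun c hc =>
          ((hf c (mem_filter.mp hc).1).comp (measurable_update x)).pow_const _
    _ ≤ (∏ c ∈ I with i ∈ S c, (∫⁻ t, f c (update x i t) ∂μ i) ^ p c) *
          ∏ c ∈ I with i ∉ S c, f c x ^ p c := by
        gcongr
        exact ENNReal.lintegral_prod_norm_pow_le _
          (fun c hc => ((hf c (mem_filter.mp hc).1).comp (measurable_update x)).aemeasurable)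
          hsum (fun c hc => hp c (mem_filter.mp hc).1)
    _ = ∏ c ∈ I, (if i ∈ S c then ∫⁻ t, f c (update x i t) ∂μ i else f c x) ^ p c := by
        rw [← prod_filter_mul_prod_filter_not I (fun c => i ∈ S c)]
        congr 1 <;> refine prod_congr rfl fun c hc => ?_ <;> simp [(mem_filter.mp hc).2]

variable [∀ i, SigmaFinite (μ i)]

/-- Finner's inequality. -/
theorem lmarginal_prod_rpow_le {T : Finset ι} (hcov : IsFractionalCover I S p T)
    (hf : ∀ c ∈ I, Measurable (f c)) (hdep : ∀ c ∈ I, DependsOn (f c) (S c)) :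
    ∫⋯∫⁻_T, (fun x => ∏ c ∈ I, f c x ^ p c) ∂μ ≤
      fun x => ∏ c ∈ I, (∫⋯∫⁻_(S c), f c ∂μ) x ^ p c := by
  induction T using Finset.induction generalizing S f with
  | empty =>
    intro x
    rw [lmarginal_empty]
    refine le_of_eq (prod_congr rfl fun c hc => ?_)
    rw [subset_empty.mp (hcov.subset c hc), lmarginal_empty]
  | @insert i T hi ih =>
    set g : κ → (∀ i, X i) → ℝ≥0∞ := fun c x =>
      if i ∈ S c then ∫⁻ t, f c (update x i t) ∂μ i else f c x with hg
    have hgm : ∀ c ∈ I, Measurable (g c) := by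
      intro c hc
      by_cases h : i ∈ S c
      · simpa only [hg, h, if_true, lmarginal_singleton] using (hf c hc).lmarginal μ (s := {i})
      · simpa only [hg, h, if_false] using hf c hc
    have hgdep : ∀ c ∈ I, DependsOn (g c) ((S c).erase i) := by
      intro c hc x y hxy
      by_cases h : i ∈ S c
      · simp only [hg, h, if_true]
        refine lintegral_congr fun t => hdep c hc fun j hj => ?_
        by_cases hji : j = i
        · subst hji; simp
        · simp [hji, hxy j (mem_erase.mpr ⟨hji, hj⟩)]
      · simp only [hg, h, if_false]
        exact hdep c hc fun j hj => hxy j (by simp [erase_eq_of_notMem h, hj])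
    intro x
    calc (∫⋯∫⁻_insert i T, (fun x => ∏ c ∈ I, f c x ^ p c) ∂μ) x
        = (∫⋯∫⁻_T, (fun x => ∫⁻ t, ∏ c ∈ I, f c (update x i t) ^ p c ∂μ i) ∂μ) x := by
          rw [lmarginal_insert' _ (Finset.measurable_prod _ fun c hc => (hf c hc).pow_const _) hi]
      _ ≤ (∫⋯∫⁻_T, (fun x => ∏ c ∈ I, g c x ^ p c) ∂μ) x :=
          lmarginal_mono (fun x => lintegral_prod_update_rpow_le hcov.nonneg
            (hcov.sum_eq_one i (mem_insert_self i T)) hf hdep x) x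
      _ ≤ ∏ c ∈ I, (∫⋯∫⁻_((S c).erase i), g c ∂μ) x ^ p c := ih (hcov.erase hi) hgm hgdep x
      _ = ∏ c ∈ I, (∫⋯∫⁻_(S c), f c ∂μ) x ^ p c := by
          refine prod_congr rfl fun c hc => ?_
          by_cases h : i ∈ S c
          · simp only [hg, h, if_true, lmarginal_erase' _ (hf c hc) h]
          · simp only [hg, h, if_false, erase_eq_of_notMem h]

end Finner

section InfimumRule

variable {E F : Finset G}

lemma isFractionalCover_translates (hE : E.Nonempty) (F : Finset G) :
    IsFractionalCover (E⁻¹ * F) (fun c => E.image (· * c) ∩ F) (fun _ => (#E : ℝ)⁻¹) F where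
  nonneg _ _ := by positivity
  subset _ _ := inter_subset_right
  sum_eq_one i hi := by
    have hfilter : {c ∈ E⁻¹ * F | i ∈ E.image (· * c) ∩ F} = E.image (fun e => e⁻¹ * i) := by
      ext c
      simp only [mem_filter, mem_image, mem_inter, and_iff_left hi]
      constructor
      · rintro ⟨-, e, he, rfl⟩
        exact ⟨e, he, inv_mul_cancel_left e c⟩
      · rintro ⟨e, he, rfl⟩
        exact ⟨mul_mem_mul (inv_mem_inv he) hi, e, he, mul_inv_cancel_left e i⟩
    rw [sum_const, hfilter, card_image_of_injective _ fun a b hab => inv_injective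
      (mul_right_cancel hab), nsmul_eq_mul, mul_inv_cancel₀ (by exact_mod_cast hE.card_pos.ne')]

lemma card_filter_image_subset_le (hE : E.Nonempty) (I : Finset G) :
    #{c ∈ I | E.image (· * c) ⊆ F} ≤ #F := by
  obtain ⟨e, he⟩ := hE
  exact card_le_card_of_injOn (e * ·) (fun c hc => (mem_filter.mp hc).2 (mem_image_of_mem _ he))
    (mul_right_injective e).injOn

lemma card_filter_not_image_subset_le (E F : Finset G) :
    #{c ∈ E⁻¹ * F | ¬ E.image (· * c) ⊆ F} ≤ #E * #((E * E⁻¹ * F) \ F) := by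
  calc #{c ∈ E⁻¹ * F | ¬ E.image (· * c) ⊆ F} ≤ #(E⁻¹ * ((E * E⁻¹ * F) \ F)) := by
        refine card_le_card fun c hc => ?_
        obtain ⟨hcI, hc⟩ := mem_filter.mp hc
        obtain ⟨y, hy, hF⟩ := not_subset.mp hc
        obtain ⟨e, he, rfl⟩ := mem_image.mp hy
        obtain ⟨a, ha, f, hf, rfl⟩ := mem_mul.mp hcI
        refine mem_mul.mpr ⟨e⁻¹, inv_mem_inv he, e * (a * f), mem_sdiff.mpr ⟨?_, hF⟩,
          inv_mul_cancel_left _ _⟩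
        rw [← mul_assoc]
        exact mul_mem_mul (mul_mem_mul he ha) hf
    _ ≤ #E⁻¹ * #((E * E⁻¹ * F) \ F) := card_mul_le
    _ = #E * #((E * E⁻¹ * F) \ F) := by rw [card_inv]

variable {u : Finset G → ℝ} {L : ℝ}

/-- Translates of `E` inside `F` contribute `u E` each; the others lie along the boundary
`E E⁻¹ F \ F` and are controlled by the linear bound on `u`. -/
lemma sum_image_mul_right_inter_le (hinv : ∀ (E : Finset G) (c : G), u (E.image (· * c)) = u E)
    (hbound : ∀ S, |u S| ≤ L * #S) (hE : E.Nonempty) (F : Finset G) :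
    ∑ c ∈ E⁻¹ * F, u (E.image (· * c) ∩ F) ≤ #F * u E + 2 * L * #E ^ 2 * #((E * E⁻¹ * F) \ F) := by
  set good := {c ∈ E⁻¹ * F | E.image (· * c) ⊆ F}
  set bad := {c ∈ E⁻¹ * F | ¬ E.image (· * c) ⊆ F}
  have hL : 0 ≤ L := nonneg_of_mul_nonneg_left ((abs_nonneg _).trans (hbound E))
    (by exact_mod_cast hE.card_pos)
  have hgood : ∑ c ∈ good, u (E.image (· * c) ∩ F) = #good * u E := by
    rw [sum_congr rfl fun c hc => by rw [inter_eq_left.mpr (mem_filter.mp hc).2, hinv],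
      sum_const, nsmul_eq_mul]
  have hbad : ∑ c ∈ bad, u (E.image (· * c) ∩ F) ≤ #bad * (L * #E) := by
    rw [← nsmul_eq_mul, ← sum_const]
    refine sum_le_sum fun c _ => (le_abs_self _).trans ((hbound _).trans ?_)
    have : #(E.image (· * c) ∩ F) ≤ #E := (card_le_card inter_subset_left).trans card_image_le
    gcongr
  have hgood_le : (#good : ℝ) ≤ #F := by exact_mod_cast card_filter_image_subset_le hE _
  have hF_le : (#F : ℝ) ≤ #good + #bad := by
    exact_mod_cast (card_le_card_mul_left (s := E⁻¹) (t := F) hE.inv).trans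
      (card_filter_add_card_filter_not (s := E⁻¹ * F) _).ge
  have hbad_le : (#bad : ℝ) ≤ #E * #((E * E⁻¹ * F) \ F) := by
    exact_mod_cast card_filter_not_image_subset_le E F
  have hgood_mul : ((#F : ℝ) - #good) * -u E ≤ #bad * (L * #E) :=
    calc ((#F : ℝ) - #good) * -u E ≤ (#F - #good) * |u E| :=
          mul_le_mul_of_nonneg_left (neg_le_abs _) (sub_nonneg.mpr hgood_le)
      _ ≤ #bad * (L * #E) := mul_le_mul (by linarith) (hbound E) (abs_nonneg _) (by positivity)
  rw [← sum_filter_add_sum_filter_not (E⁻¹ * F) (fun c => E.image (· * c) ⊆ F), hgood]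
  nlinarith [mul_le_mul_of_nonneg_left hbad_le (by positivity : (0 : ℝ) ≤ L * #E)]

lemma div_card_le_of_shearer (hinv : ∀ (E : Finset G) (c : G), u (E.image (· * c)) = u E)
    (hshearer : ∀ (I : Finset G) (S : G → Finset G) (p : G → ℝ) (T : Finset G),
      IsFractionalCover I S p T → u T ≤ ∑ c ∈ I, p c * u (S c))
    (hbound : ∀ S, |u S| ≤ L * #S) (hE : E.Nonempty) (hF : F.Nonempty) :
    u F / #F ≤ u E / #E + 2 * L * #E * (#((E * E⁻¹ * F) \ F) / #F) := by
  have he : (0 : ℝ) < #E := by exact_mod_cast hE.card_pos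
  have hf : (0 : ℝ) < #F := by exact_mod_cast hF.card_pos
  have hcover := hshearer _ _ _ _ (isFractionalCover_translates hE F)
  rw [← mul_sum] at hcover
  have := hcover.trans (mul_le_mul_of_nonneg_left
    (sum_image_mul_right_inter_le hinv hbound hE F) (by positivity))
  rw [div_le_iff₀ hf]
  calc u F ≤ (#E : ℝ)⁻¹ * (#F * u E + 2 * L * #E ^ 2 * #((E * E⁻¹ * F) \ F)) := this
    _ = (u E / #E + 2 * L * #E * (#((E * E⁻¹ * F) \ F) / #F)) * #F := by
        field_simp

theorem infimum_rule_of_shearer (hinv : ∀ (E : Finset G) (c : G), u (E.image (· * c)) = u E)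
    (hshearer : ∀ (I : Finset G) (S : G → Finset G) (p : G → ℝ) (T : Finset G),
      IsFractionalCover I S p T → u T ≤ ∑ c ∈ I, p c * u (S c))
    (hbound : ∀ S, |u S| ≤ L * #S) :
    ∀ ε : ℝ, 0 < ε → ∃ (K : Finset G) (δ : ℝ), 0 < δ ∧
      ∀ F : Finset G, F.Nonempty → FInv K δ F →
        |u F / #F - sInf {r | ∃ B : Finset G, B.Nonempty ∧ r = u B / #B}| < ε := by
  intro ε hε
  set P := {r | ∃ B : Finset G, B.Nonempty ∧ r = u B / #B}
  have hbdd : BddBelow P := by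
    refine ⟨-L, ?_⟩
    rintro _ ⟨B, hB, rfl⟩
    rw [le_div_iff₀ (by exact_mod_cast hB.card_pos)]
    linarith [neg_abs_le (u B), hbound B]
  obtain ⟨_, ⟨E, hE, rfl⟩, hEε⟩ := exists_lt_of_csInf_lt
    (⟨_, {1}, singleton_nonempty 1, rfl⟩ : P.Nonempty) (lt_add_of_pos_right (sInf P) (half_pos hε))
  have he : (0 : ℝ) < #E := by exact_mod_cast hE.card_pos
  have hL : 0 ≤ L := nonneg_of_mul_nonneg_left ((abs_nonneg _).trans (hbound E)) he
  set δ := ε / (4 * (L * #E + 1))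
  have hδ : 2 * L * #E * δ ≤ ε / 2 := by
    rw [show 2 * L * #E * δ = ε / 2 * (L * #E / (L * #E + 1)) by simp only [δ]; field_simp; ring]
    exact mul_le_of_le_one_right (by positivity) (div_le_one_of_le₀ (by linarith) (by positivity))
  refine ⟨E * E⁻¹, δ, by positivity, fun F hF hFinv => ?_⟩
  have hboundary : (#((E * E⁻¹ * F) \ F) : ℝ) / #F ≤ δ := by
    rw [div_le_iff₀ (by exact_mod_cast hF.card_pos)]
    exact le_trans (by exact_mod_cast card_le_card fun x hx => by simp [symmDiff_def, hx])
      hFinv.le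
  have hup := div_card_le_of_shearer hinv hshearer hbound hE hF
  have hlow : sInf P ≤ u F / #F := csInf_le hbdd ⟨F, hF, rfl⟩
  have := mul_le_mul_of_nonneg_left hboundary (by positivity : (0 : ℝ) ≤ 2 * L * #E)
  rw [abs_sub_lt_iff]
  constructor <;> linarith

end InfimumRule

section CountingMeasure

variable {ι : Type*} [DecidableEq ι] {X : ι → Type*} [∀ i, MeasurableSpace (X i)]
  [∀ i, Fintype (X i)] [∀ i, MeasurableSingletonClass (X i)]

lemma lmarginal_count_eq_sum (s : Finset ι) (f : (∀ i, X i) → ℝ≥0∞) (x : ∀ i, X i) :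
    (∫⋯∫⁻_s, f ∂fun _ => Measure.count) x = ∑ y : (∀ i : s, X i), f (updateFinset x s y) := by
  simp [lmarginal, lintegral_fintype]

end CountingMeasure

lemma ENNReal.ofReal_prod_rpow {κ : Type*} {s : Finset κ} {x p : κ → ℝ}
    (hx : ∀ c ∈ s, 0 ≤ x c) (hp : ∀ c ∈ s, 0 ≤ p c) :
    ENNReal.ofReal (∏ c ∈ s, x c ^ p c) = ∏ c ∈ s, ENNReal.ofReal (x c) ^ p c := by
  rw [ENNReal.ofReal_prod_of_nonneg fun c hc => Real.rpow_nonneg (hx c hc) _]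
  exact prod_congr rfl fun c hc => (ENNReal.ofReal_rpow_of_nonneg (hx c hc) (hp c hc)).symm

lemma abs_log_sum_exp_sub_log_card_le {α : Type*} [Fintype α] [Nonempty α] {a : α → ℝ} {B : ℝ}
    (ha : ∀ x, |a x| ≤ B) :
    |Real.log (∑ x, Real.exp (a x)) - Real.log (Fintype.card α)| ≤ B := by
  have hcard : (0 : ℝ) < Fintype.card α := by exact_mod_cast Fintype.card_pos
  have hup : ∑ x, Real.exp (a x) ≤ Fintype.card α * Real.exp B := by
    simpa using sum_le_sum fun x (_ : x ∈ univ) => Real.exp_le_exp.mpr (abs_le.mp (ha x)).2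
  have hlow : Fintype.card α * Real.exp (-B) ≤ ∑ x, Real.exp (a x) := by
    simpa using sum_le_sum fun x (_ : x ∈ univ) => Real.exp_le_exp.mpr (abs_le.mp (ha x)).1
  have hup' := Real.log_le_log (by positivity) hup
  have hlow' := Real.log_le_log (by positivity) hlow
  rw [Real.log_mul hcard.ne' (Real.exp_pos _).ne', Real.log_exp] at hup' hlow'
  rw [abs_sub_le_iff]
  constructor <;> linarith

lemma exists_abs_le_of_continuous {ι : Type*} {φ : (ι → ℕ) → ℝ} (hφ : Continuous φ)
    (A : Finset ℕ) : ∃ M, ∀ x : ι → ℕ, (∀ i, x i ∈ A) → |φ x| ≤ M := by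
  obtain ⟨M, hM⟩ := (isCompact_univ_pi fun _ => A.finite_toSet.isCompact
    ).exists_bound_of_continuousOn hφ.continuousOn
  exact ⟨M, fun x hx => hM x fun i _ => hx i⟩

section Pressure

variable {G : Type*} [Group G] {φ : (G → ℕ) → ℝ} {A : Finset ℕ} {M : ℝ}

lemma phiSum_image_mul_right [DecidableEq G] (c : G) (E : Finset G) (x : G → ℕ) :
    phiSum φ (E.image (· * c)) x = phiSum φ E (shift c x) := by
  rw [phiSum, sum_image fun _ _ _ _ h => mul_right_cancel h]
  exact sum_congr rfl fun e _ => congrArg φ (funext fun g => by simp [shift, mul_assoc])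

lemma ZFA_image_mul_right [DecidableEq G] (c : G) (E : Finset G) :
    ZFA φ A (E.image (· * c)) = ZFA φ A E := by
  let τ : E ≃ E.image (· * c) :=
    { toFun e := ⟨e * c, mem_image_of_mem _ e.2⟩
      invFun i := ⟨i * c⁻¹, by obtain ⟨e, he, hi⟩ := mem_image.mp i.2; simpa [← hi] using he⟩
      left_inv e := Subtype.ext (mul_inv_cancel_right _ _)
      right_inv i := Subtype.ext (inv_mul_cancel_right _ _) }
  have hsup : ∀ w : E.image (· * c) → ℕ,
      cylSupA φ A (E.image (· * c)) w = cylSupA φ A E (w ∘ τ) := by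
    intro w
    unfold cylSupA
    congr 1
    ext r
    constructor
    · rintro ⟨x, hx, hxw, rfl⟩
      exact ⟨shift c x, fun g => hx _, fun e => hxw (τ e), phiSum_image_mul_right c E x⟩
    · rintro ⟨x, hx, hxw, rfl⟩
      refine ⟨shift c⁻¹ x, fun g => hx _,
        fun i => (by simpa using hxw (τ.symm i) : x (τ.symm i) = w i), ?_⟩
      rw [phiSum_image_mul_right]
      exact congrArg _ (funext fun g => by simp [shift])
  refine Fintype.sum_equiv (τ.arrowCongr (Equiv.refl A)).symm _ _ fun w => ?_
  rw [hsup]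
  rfl

lemma abs_phiSum_le (hM : ∀ x : G → ℕ, (∀ g, x g ∈ A) → |φ x| ≤ M) (F : Finset G)
    {x : G → ℕ} (hx : ∀ g, x g ∈ A) : |phiSum φ F x| ≤ M * #F := by
  calc |phiSum φ F x| ≤ ∑ g ∈ F, |φ (shift g x)| := abs_sum_le_sum_abs _ _
    _ ≤ ∑ _g ∈ F, M := sum_le_sum fun g _ => hM _ fun h => hx (h * g)
    _ = M * #F := by rw [sum_const, nsmul_eq_mul, mul_comm]

lemma phiSum_le_cylSupA (hM : ∀ x : G → ℕ, (∀ g, x g ∈ A) → |φ x| ≤ M) {F : Finset G}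
    {w : F → ℕ} {x : G → ℕ} (hx : ∀ g, x g ∈ A) (hxw : ∀ g : F, x g = w g) :
    phiSum φ F x ≤ cylSupA φ A F w := by
  refine le_csSup ⟨M * #F, ?_⟩ ⟨x, hx, hxw, rfl⟩
  rintro _ ⟨x', hx', -, rfl⟩
  exact (abs_le.mp (abs_phiSum_le hM F hx')).2

lemma cylSupA_le_of_forall {F : Finset G} (y : G → A) {b : ℝ}
    (h : ∀ x : G → ℕ, (∀ g, x g ∈ A) → (∀ g : F, x g = y g) → phiSum φ F x ≤ b) :
    cylSupA φ A F (fun i => y i) ≤ b :=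
  csSup_le ⟨_, fun g => y g, fun g => (y g).2, fun _ => rfl, rfl⟩ fun _ ⟨x, hx, hxw, hr⟩ =>
    hr ▸ h x hx hxw

lemma abs_cylSupA_le (hM : ∀ x : G → ℕ, (∀ g, x g ∈ A) → |φ x| ≤ M) (F : Finset G)
    (y : G → A) : |cylSupA φ A F (fun i => y i)| ≤ M * #F := by
  have hy : ∀ g, (y g : ℕ) ∈ A := fun g => (y g).2
  refine abs_le.mpr ⟨?_, cylSupA_le_of_forall y fun x hx _ => (abs_le.mp (abs_phiSum_le hM F hx)).2⟩
  exact (neg_le_of_abs_le (abs_phiSum_le hM F hy)).trans (phiSum_le_cylSupA hM hy fun _ => rfl)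

lemma cylSupA_le_sum [DecidableEq G] (hM : ∀ x : G → ℕ, (∀ g, x g ∈ A) → |φ x| ≤ M)
    {κ : Type*} {I : Finset κ} {S : κ → Finset G} {p : κ → ℝ} {F : Finset G}
    (hcov : IsFractionalCover I S p F) (y : G → A) :
    cylSupA φ A F (fun i => y i) ≤ ∑ c ∈ I, p c * cylSupA φ A (S c) (fun i => y i) := by
  refine cylSupA_le_of_forall y fun x hx hxw => ?_
  rw [phiSum, hcov.sum_eq]
  exact sum_le_sum fun c hc => mul_le_mul_of_nonneg_left
    (phiSum_le_cylSupA hM hx fun i => hxw ⟨i, hcov.subset c hc i.2⟩) (hcov.nonneg c hc)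

noncomputable def cylWeight (φ : (G → ℕ) → ℝ) (A : Finset ℕ) (F : Finset G) (y : G → A) : ℝ :=
  Real.exp (cylSupA φ A F fun i => y i)

lemma ZFA_eq_sum_cylWeight [DecidableEq G] (y₀ : G → A) (F : Finset G) :
    ZFA φ A F = ∑ w : F → A, cylWeight φ A F (updateFinset y₀ F w) := by
  refine sum_congr rfl fun w _ => ?_
  simp [cylWeight, updateFinset_def]

lemma cylWeight_pos (F : Finset G) (y : G → A) : 0 < cylWeight φ A F y := Real.exp_pos _

lemma dependsOn_cylWeight (F : Finset G) : DependsOn (cylWeight φ A F) F := fun x y h => by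
  simp only [cylWeight]
  congr 2
  exact funext fun i => by rw [h i i.2]

lemma measurable_cylWeight (F : Finset G) : Measurable (cylWeight φ A F) :=
  (measurable_of_finite (fun w : F → A => Real.exp (cylSupA φ A F fun i => w i))).comp
    (measurable_pi_lambda _ fun i => measurable_pi_apply (i : G))

lemma cylWeight_le_prod_rpow [DecidableEq G] (hM : ∀ x : G → ℕ, (∀ g, x g ∈ A) → |φ x| ≤ M)
    {κ : Type*} {I : Finset κ} {S : κ → Finset G} {p : κ → ℝ} {F : Finset G}
    (hcov : IsFractionalCover I S p F) (y : G → A) :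
    cylWeight φ A F y ≤ ∏ c ∈ I, cylWeight φ A (S c) y ^ p c := by
  calc cylWeight φ A F y ≤ Real.exp (∑ c ∈ I, p c * cylSupA φ A (S c) (fun i => y i)) :=
        Real.exp_le_exp.mpr (cylSupA_le_sum hM hcov y)
    _ = ∏ c ∈ I, cylWeight φ A (S c) y ^ p c := by
        rw [Real.exp_sum]
        exact prod_congr rfl fun c _ => by rw [mul_comm, Real.exp_mul, cylWeight]

lemma ZFA_pos [DecidableEq G] (hA : A.Nonempty) (F : Finset G) : 0 < ZFA φ A F := by
  obtain ⟨a, ha⟩ := hA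
  have : Nonempty (F → A) := ⟨fun _ => ⟨a, ha⟩⟩
  exact sum_pos (fun w _ => Real.exp_pos _) univ_nonempty

lemma abs_log_ZFA_le [DecidableEq G] (hA : A.Nonempty)
    (hM : ∀ x : G → ℕ, (∀ g, x g ∈ A) → |φ x| ≤ M) (F : Finset G) :
    |Real.log (ZFA φ A F)| ≤ (Real.log #A + M) * #F := by
  obtain ⟨a, ha⟩ := hA
  have : Nonempty (F → A) := ⟨fun _ => ⟨a, ha⟩⟩
  have hlogA : 0 ≤ Real.log #A := Real.log_nonneg (by exact_mod_cast card_pos.mpr ⟨a, ha⟩)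
  have hZ := abs_log_sum_exp_sub_log_card_le fun w : F → A =>
    abs_cylSupA_le hM F (updateFinset (fun _ => ⟨a, ha⟩) F w)
  rw [Fintype.card_fun, Fintype.card_coe, Fintype.card_coe, Nat.cast_pow, Real.log_pow] at hZ
  rw [ZFA_eq_sum_cylWeight (fun _ => ⟨a, ha⟩)]
  unfold cylWeight
  obtain ⟨hlow, hup⟩ := abs_le.mp hZ
  rw [abs_le]
  constructor <;> nlinarith [mul_nonneg (Nat.cast_nonneg (α := ℝ) #F) hlogA]

lemma lmarginal_ofReal_cylWeight [DecidableEq G] (y₀ : G → A) (T : Finset G) :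
    (∫⋯∫⁻_T, (fun y => ENNReal.ofReal (cylWeight φ A T y)) ∂fun _ => Measure.count) y₀ =
      ENNReal.ofReal (ZFA φ A T) := by
  rw [lmarginal_count_eq_sum, ZFA_eq_sum_cylWeight y₀,
    ENNReal.ofReal_sum_of_nonneg fun _ _ => (cylWeight_pos _ _).le]

lemma ZFA_le_prod_rpow [DecidableEq G] (hA : A.Nonempty)
    (hM : ∀ x : G → ℕ, (∀ g, x g ∈ A) → |φ x| ≤ M) {κ : Type*} {I : Finset κ}
    {S : κ → Finset G} {p : κ → ℝ} {F : Finset G} (hcov : IsFractionalCover I S p F) :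
    ZFA φ A F ≤ ∏ c ∈ I, ZFA φ A (S c) ^ p c := by
  obtain ⟨a, ha⟩ := hA
  let y₀ : G → A := fun _ => ⟨a, ha⟩
  have hZ : ∀ c ∈ I, 0 ≤ ZFA φ A (S c) := fun c _ => (ZFA_pos ⟨a, ha⟩ _).le
  refine (ENNReal.ofReal_le_ofReal_iff (prod_nonneg fun c hc => Real.rpow_nonneg (hZ c hc) _)).mp ?_
  calc ENNReal.ofReal (ZFA φ A F)
      = (∫⋯∫⁻_F, (fun y => ENNReal.ofReal (cylWeight φ A F y)) ∂fun _ => Measure.count) y₀ :=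
        (lmarginal_ofReal_cylWeight y₀ F).symm
    _ ≤ (∫⋯∫⁻_F, (fun y => ∏ c ∈ I, ENNReal.ofReal (cylWeight φ A (S c) y) ^ p c)
          ∂fun _ => Measure.count) y₀ :=
        lmarginal_mono (fun y => by
          rw [← ENNReal.ofReal_prod_rpow (fun _ _ => (cylWeight_pos _ _).le) hcov.nonneg]
          exact ENNReal.ofReal_le_ofReal (cylWeight_le_prod_rpow hM hcov y)) y₀
    _ ≤ ∏ c ∈ I, (∫⋯∫⁻_(S c), (fun y => ENNReal.ofReal (cylWeight φ A (S c) y))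
          ∂fun _ => Measure.count) y₀ ^ p c :=
        lmarginal_prod_rpow_le hcov
          (fun c _ => ENNReal.measurable_ofReal.comp (measurable_cylWeight _))
          (fun c _ x y h => congrArg ENNReal.ofReal (dependsOn_cylWeight _ h)) y₀
    _ = ENNReal.ofReal (∏ c ∈ I, ZFA φ A (S c) ^ p c) := by
        simp only [lmarginal_ofReal_cylWeight]
        exact (ENNReal.ofReal_prod_rpow hZ hcov.nonneg).symm

lemma log_ZFA_le_sum [DecidableEq G] (hA : A.Nonempty)
    (hM : ∀ x : G → ℕ, (∀ g, x g ∈ A) → |φ x| ≤ M) {κ : Type*} {I : Finset κ}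
    {S : κ → Finset G} {p : κ → ℝ} {F : Finset G} (hcov : IsFractionalCover I S p F) :
    Real.log (ZFA φ A F) ≤ ∑ c ∈ I, p c * Real.log (ZFA φ A (S c)) := by
  calc Real.log (ZFA φ A F) ≤ Real.log (∏ c ∈ I, ZFA φ A (S c) ^ p c) :=
        Real.log_le_log (ZFA_pos hA F) (ZFA_le_prod_rpow hA hM hcov)
    _ = ∑ c ∈ I, p c * Real.log (ZFA φ A (S c)) := by
        rw [Real.log_prod fun c _ => (Real.rpow_pos_of_pos (ZFA_pos hA _) _).ne']
        exact sum_congr rfl fun c _ => Real.log_rpow (ZFA_pos hA _) _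

end Pressure

theorem pressure_finite_alphabet_exists_and_infimum_rule_general
    (φ : (G → ℕ) → ℝ) (hφ : Continuous φ)
    (A : Finset ℕ) (hA : A.Nonempty) :
    ∀ ε : ℝ, 0 < ε → ∃ (K : Finset G) (δ : ℝ), 0 < δ ∧
      ∀ F : Finset G, F.Nonempty → FInv K δ F →
        |Real.log (ZFA φ A F) / F.card -
          sInf {r | ∃ B : Finset G, B.Nonempty ∧ r = Real.log (ZFA φ A B) / B.card}| < ε := by
  obtain ⟨M, hM⟩ := exists_abs_le_of_continuous hφ A
  exact infimum_rule_of_shearer (L := Real.log #A + M)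
    (fun E c => congrArg Real.log (ZFA_image_mul_right c E))
    (fun _ _ _ _ hcov => log_ZFA_le_sum hA hM hcov) (abs_log_ZFA_le hA hM)

/-- for a continuous potential and a finite alphabet `A`, the pressure
`p(A,φ)` exists as a limit over sets becoming more and more invariant and satisfies
the infimum rule. -/
theorem pressure_finite_alphabet_exists_and_infimum_rule [Countable G]
    (φ : (G → ℕ) → ℝ) (hφ : Continuous φ) (hG : Amen (G := G))
    (A : Finset ℕ) (hA : A.Nonempty) :
    ∀ ε : ℝ, 0 < ε → ∃ (K : Finset G) (δ : ℝ), 0 < δ ∧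
      ∀ F : Finset G, F.Nonempty → FInv K δ F →
        |Real.log (ZFA φ A F) / F.card -
          sInf {r | ∃ B : Finset G, B.Nonempty ∧ r = Real.log (ZFA φ A B) / B.card}| < ε :=
  pressure_finite_alphabet_exists_and_infimum_rule_general φ hφ A hA
end

section
/- Let φ: ℕ^G → ℝ be exp-summable and continuous with finite oscillation, and let ν be a Borel probability measure on ℕ^G with ∫φ dν > −∞. Then the Shannon entropy H(ν) = −Σ_{a∈ℕ} ν([a]) log ν([a]) is finite. If moreover ν is G-invariant, then H_F(ν) = −Σ_{w∈ℕ^F} ν([w]) log ν([w]) is finite for every finite F ⊆ G, with H_F(ν) ≤ |F|(log Z_{1_G}(φ) − ∫φ dν). -/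
open scoped Pointwise symmDiff
open Filter MeasureTheory

variable {G : Type*} [Group G] [DecidableEq G]

/-!
For a probability vector `p` and reals `t` with `Z = ∑ exp tᵢ < ∞`, Gibbs' inequality gives
`H(p) ≤ log Z - ∑ pᵢ tᵢ`. Take for `p` the law of the `F`-pattern under `ν` and
`t_w = ∑_{g ∈ F} sup φ([w g])`. Since `φ_F ≤ t_w` on the cylinder `[w]`, we get
`∑ p_w t_w ≥ ∫ φ_F dν = |F| ∫ φ dν` by invariance, while `∑_w exp t_w = Z_{1_G}(φ) ^ |F|`.
Without invariance the same argument applies to the partition by the symbol at `1_G`.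
-/

open Real
open scoped ENNReal NNReal

theorem ENNReal.tsum_pi_prod_eq_prod_tsum {ι β : Type*} [Fintype ι] (f : ι → β → ℝ≥0∞) :
    ∑' w : ι → β, ∏ i, f i (w i) = ∏ i, ∑' b, f i b := by
  revert f
  refine Fintype.induction_empty_option
    (P := fun α _ => ∀ f : α → β → ℝ≥0∞, ∑' w : α → β, ∏ i, f i (w i) = ∏ i, ∑' b, f i b)
    ?_ ?_ ?_ ι
  · intro α γ _ e ih f
    let : Fintype α := Fintype.ofEquiv γ e.symm
    rw [← (e.arrowCongr (Equiv.refl β)).tsum_eq]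
    convert ih (fun a => f (e a)) using 1
    · exact tsum_congr fun w => (Fintype.prod_equiv e _ _ fun i => by simp).symm
    · exact (Fintype.prod_equiv e _ _ fun i => rfl).symm
  · simp
  · intro α _ ih f
    rw [← (Equiv.piOptionEquivProd (β := fun _ => β)).symm.tsum_eq, ENNReal.tsum_prod']
    simp [Fintype.prod_option, ENNReal.tsum_mul_left, ENNReal.tsum_mul_right, ih]

theorem hasSum_pi_prod_of_nonneg {ι β : Type*} [Fintype ι] {f : ι → β → ℝ}
    (hf0 : ∀ i b, 0 ≤ f i b) (hf : ∀ i, Summable (f i)) :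
    HasSum (fun w : ι → β => ∏ i, f i (w i)) (∏ i, ∑' b, f i b) := by
  lift f to ι → β → ℝ≥0 using hf0
  simp only [NNReal.summable_coe] at hf
  simp only [← NNReal.coe_tsum, ← NNReal.coe_prod, NNReal.hasSum_coe, ← ENNReal.hasSum_coe]
  push_cast
  simp only [ENNReal.coe_tsum (hf _)]
  rw [← ENNReal.tsum_pi_prod_eq_prod_tsum]
  exact ENNReal.summable.hasSum

/- `p ↦ p log p - p` and `exp` are convex conjugates; this is their Fenchel–Young inequality. -/
theorem Real.negMulLog_le_exp_sub {p : ℝ} (hp : 0 ≤ p) (t : ℝ) :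
    negMulLog p ≤ exp t - p - p * t := by
  have hq := exp_pos t
  have key := negMulLog_le_one_sub_self (div_nonneg hp hq.le)
  calc negMulLog p = negMulLog (exp t * (p / exp t)) := by rw [mul_div_cancel₀ _ hq.ne']
    _ = p / exp t * (-exp t * t) + exp t * negMulLog (p / exp t) := by
        rw [negMulLog_mul, negMulLog, log_exp]
    _ ≤ p / exp t * (-exp t * t) + exp t * (1 - p / exp t) := by gcongr
    _ = exp t - p - p * t := by field_simp; ring

theorem tsum_negMulLog_le_log_tsum_exp_sub {ι : Type*} {p t : ι → ℝ} (hp0 : ∀ i, 0 ≤ p i)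
    (hp : HasSum p 1) (ht : Summable fun i => exp (t i)) (hpt : Summable fun i => p i * t i) :
    Summable (fun i => negMulLog (p i)) ∧
      ∑' i, negMulLog (p i) ≤ log (∑' i, exp (t i)) - ∑' i, p i * t i := by
  set Z := ∑' i, exp (t i)
  have hZ : 0 < Z := by
    obtain ⟨i⟩ : Nonempty ι := by
      rcases isEmpty_or_nonempty ι with h | h
      · simpa using hp.unique hasSum_empty
      · exact h
    exact ht.tsum_pos (fun _ => (exp_pos _).le) i (exp_pos _)
  set u := fun i => t i - log Z
  have hu : HasSum (fun i => exp (u i)) 1 := by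
    have hexp_u : (fun i => exp (u i)) = fun i => exp (t i) / Z :=
      funext fun i => by simp [u, exp_sub, exp_log hZ]
    rw [hexp_u, ← div_self hZ.ne']
    exact ht.hasSum.div_const Z
  have hbound : HasSum (fun i => exp (u i) - p i - p i * u i)
      (1 - 1 - (∑' i, p i * t i - log Z)) := by
    refine (hu.sub hp).sub ?_
    simpa [u, mul_sub] using hpt.hasSum.sub (hp.mul_right (log Z))
  have hle : ∀ i, negMulLog (p i) ≤ exp (u i) - p i - p i * u i :=
    fun i => negMulLog_le_exp_sub (hp0 i) (u i)
  have hsum : Summable fun i => negMulLog (p i) :=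
    hbound.summable.of_nonneg_of_le
      (fun i => negMulLog_nonneg (hp0 i) (le_hasSum hp i fun j _ => hp0 j)) hle
  refine ⟨hsum, ?_⟩
  linarith [hasSum_le hle hsum.hasSum hbound]

theorem le_log_tsum_exp {ι : Type*} {t : ι → ℝ} (ht : Summable fun i => exp (t i)) (i : ι) :
    t i ≤ log (∑' j, exp (t j)) := by
  have hle : exp (t i) ≤ ∑' j, exp (t j) := ht.le_tsum i fun j _ => (exp_pos _).le
  exact (le_log_iff_exp_le ((exp_pos _).trans_le hle)).2 hle

theorem tsum_negMulLog_measureReal_fiber_le {α ι : Type*} [MeasurableSpace α] [Countable ι]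
    [MeasurableSpace ι] [MeasurableSingletonClass ι] (μ : Measure α) [IsProbabilityMeasure μ]
    {X : α → ι} (hX : Measurable X) {f : α → ℝ} (hf : Integrable f μ) {t : ι → ℝ}
    (hft : ∀ x, f x ≤ t (X x)) (ht : Summable fun i => exp (t i)) :
    Summable (fun i => negMulLog (μ.real (X ⁻¹' {i}))) ∧
      ∑' i, negMulLog (μ.real (X ⁻¹' {i})) ≤ log (∑' i, exp (t i)) - ∫ x, f x ∂μ := by
  have hfiber : ∀ {g : α → ℝ}, Integrable g μ →
      HasSum (fun i => ∫ x in X ⁻¹' {i}, g x ∂μ) (∫ x, g x ∂μ) := fun hg => by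
    simpa [← Set.preimage_iUnion, Set.iUnion_of_singleton] using
      hasSum_integral_iUnion (fun i => hX (measurableSet_singleton i))
        (pairwise_disjoint_fiber X) hg.integrableOn
  have hp : HasSum (fun i => μ.real (X ⁻¹' {i})) 1 := by
    simpa using hfiber (integrable_const (1 : ℝ))
  have hlow : ∀ i, ∫ x in X ⁻¹' {i}, f x ∂μ ≤ μ.real (X ⁻¹' {i}) * t i := fun i => by
    simpa [mul_comm] using setIntegral_mono_on hf.integrableOn
      (integrableOn_const (measure_ne_top μ _)) (hX (measurableSet_singleton i))
      fun x (hx : X x = i) => hx ▸ hft x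
  have hup : ∀ i, μ.real (X ⁻¹' {i}) * t i ≤ μ.real (X ⁻¹' {i}) * log (∑' j, exp (t j)) :=
    fun i => mul_le_mul_of_nonneg_left (le_log_tsum_exp ht i) measureReal_nonneg
  have hpt : Summable fun i => μ.real (X ⁻¹' {i}) * t i := by
    have hgap : Summable fun i => μ.real (X ⁻¹' {i}) * t i - ∫ x in X ⁻¹' {i}, f x ∂μ :=
      ((hp.summable.mul_right _).sub (hfiber hf).summable).of_nonneg_of_le
        (fun i => sub_nonneg.2 (hlow i)) (fun i => sub_le_sub_right (hup i) _)
    simpa using hgap.add (hfiber hf).summable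
  obtain ⟨hsum, hle⟩ := tsum_negMulLog_le_log_tsum_exp_sub (fun i => measureReal_nonneg) hp ht hpt
  exact ⟨hsum, hle.trans (by linarith [hasSum_le hlow (hfiber hf) hpt.hasSum])⟩

theorem MeasureTheory.MeasurePreserving.integral_comp_of_aestronglyMeasurable {α β : Type*}
    [MeasurableSpace α] [MeasurableSpace β] {μ : Measure α} {ν : Measure β} {T : α → β}
    (hT : MeasurePreserving T μ ν) {g : β → ℝ} (hg : AEStronglyMeasurable g ν) :
    ∫ x, g (T x) ∂μ = ∫ y, g y ∂ν := by
  rw [← integral_map hT.measurable.aemeasurable (hT.map_eq ▸ hg), hT.map_eq]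

theorem le_csSup_fiber_of_bddAbove_abs_sub {α β : Type*} {φ : α → ℝ} (X : α → β)
    (hosc : BddAbove {d | ∃ x y, X x = X y ∧ d = |φ x - φ y|}) (x : α) :
    φ x ≤ sSup {r | ∃ y, X y = X x ∧ r = φ y} := by
  obtain ⟨D, hD⟩ := hosc
  refine le_csSup ⟨φ x + D, ?_⟩ ⟨x, rfl, rfl⟩
  rintro _ ⟨y, hy, rfl⟩
  linarith [(abs_le.1 (hD ⟨y, x, hy, rfl⟩)).2]

omit [Group G] [DecidableEq G] in
theorem cylPat_eq_preimage_restrict (F : Finset G) (w : ↥F → ℕ) :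
    cylPat F w = (F.restrict : (G → ℕ) → ↥F → ℕ) ⁻¹' {w} := by
  ext x
  simp [cylPat, funext_iff]

omit [DecidableEq G] in
theorem phiSum_le_sum {φ : (G → ℕ) → ℝ} {s : ℕ → ℝ} (hs : ∀ x, φ x ≤ s (x 1))
    (F : Finset G) (x : G → ℕ) : phiSum φ F x ≤ ∑ g : ↥F, s (F.restrict x g) := by
  rw [phiSum, ← Finset.sum_coe_sort]
  refine Finset.sum_le_sum fun g _ => ?_
  simpa [shift] using hs (shift g x)

omit [DecidableEq G] in
theorem integrable_phiSum {φ : (G → ℕ) → ℝ} {ν : Measure (G → ℕ)}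
    (hinv : ∀ g : G, MeasurePreserving (shift g) ν ν) (hint : Integrable φ ν) (F : Finset G) :
    Integrable (phiSum φ F) ν :=
  integrable_finsetSum F fun g _ => (hinv g).integrable_comp hint.aestronglyMeasurable |>.2 hint

omit [DecidableEq G] in
theorem integral_phiSum {φ : (G → ℕ) → ℝ} {ν : Measure (G → ℕ)}
    (hinv : ∀ g : G, MeasurePreserving (shift g) ν ν) (hint : Integrable φ ν) (F : Finset G) :
    ∫ x, phiSum φ F x ∂ν = F.card * ∫ x, φ x ∂ν := by
  have hshift : ∀ g, ∫ x, φ (shift g x) ∂ν = ∫ x, φ x ∂ν := fun g =>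
    (hinv g).integral_comp_of_aestronglyMeasurable hint.aestronglyMeasurable
  simp only [phiSum]
  rw [integral_finsetSum (f := fun g x => φ (shift g x)) F fun g _ =>
    (hinv g).integrable_comp hint.aestronglyMeasurable |>.2 hint]
  simp [hshift]

theorem finite_Shannon_entropy_general
    (φ : (G → ℕ) → ℝ) (hexp : ExpSummable φ)
    (hosc : BddAbove {d | ∃ x y : G → ℕ, x 1 = y 1 ∧ d = |φ x - φ y|})
    (ν : Measure (G → ℕ)) [IsProbabilityMeasure ν] (hint : Integrable φ ν) :
    Summable (fun a : ℕ => Real.negMulLog ((ν {x : G → ℕ | x 1 = a}).toReal)) ∧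
    ((∀ g : G, MeasurePreserving (shift g) ν ν) →
      ∀ F : Finset G,
        Summable (fun w : ↥F → ℕ => Real.negMulLog ((ν (cylPat F w)).toReal)) ∧
        HFent ν F ≤ (F.card : ℝ) *
          (Real.log (∑' a : ℕ, Real.exp (sSup {r | ∃ x : G → ℕ, x 1 = a ∧ r = φ x})) -
            ∫ x, φ x ∂ν)) := by
  set s : ℕ → ℝ := fun a => sSup {r | ∃ x : G → ℕ, x 1 = a ∧ r = φ x}
  have hs : ∀ x, φ x ≤ s (x 1) := le_csSup_fiber_of_bddAbove_abs_sub (fun x : G → ℕ => x 1) hosc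
  refine ⟨(tsum_negMulLog_measureReal_fiber_le ν (measurable_pi_apply 1) hint hs hexp).1,
    fun hinv F => ?_⟩
  have hZF : HasSum (fun w : ↥F → ℕ => exp (∑ g, s (w g))) ((∑' a, exp (s a)) ^ F.card) := by
    simpa [exp_sum] using hasSum_pi_prod_of_nonneg (fun (_ : ↥F) a => (exp_pos (s a)).le)
      (fun _ => hexp)
  have hF := tsum_negMulLog_measureReal_fiber_le ν (Finset.measurable_restrict F)
    (integrable_phiSum hinv hint F) (phiSum_le_sum hs F) hZF.summable
  rw [hZF.tsum_eq, log_pow, integral_phiSum hinv hint] at hF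
  simp only [measureReal_def, ← cylPat_eq_preimage_restrict] at hF
  rw [mul_sub]
  exact hF

/-- if `φ` is exp-summable, continuous, with finite oscillation, and
`∫ φ dν > -∞` (i.e. `φ` is `ν`-integrable), then the Shannon entropy `H(ν)` is finite;
and if moreover `ν` is `G`-invariant, `H_F(ν)` is finite for every finite `F`, with
`H_F(ν) ≤ |F| (log Z_{1_G}(φ) − ∫ φ dν)`. -/
theorem finite_Shannon_entropy
    (φ : (G → ℕ) → ℝ) (hexp : ExpSummable φ) (hcont : Continuous φ)
    (hosc : BddAbove {d | ∃ x y : G → ℕ, x 1 = y 1 ∧ d = |φ x - φ y|})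
    (ν : Measure (G → ℕ)) [IsProbabilityMeasure ν] (hint : Integrable φ ν) :
    Summable (fun a : ℕ => Real.negMulLog ((ν {x : G → ℕ | x 1 = a}).toReal)) ∧
    ((∀ g : G, MeasurePreserving (shift g) ν ν) →
      ∀ F : Finset G,
        Summable (fun w : ↥F → ℕ => Real.negMulLog ((ν (cylPat F w)).toReal)) ∧
        HFent ν F ≤ (F.card : ℝ) *
          (Real.log (∑' a : ℕ, Real.exp (sSup {r | ∃ x : G → ℕ, x 1 = a ∧ r = φ x})) -
            ∫ x, φ x ∂ν)) :=
  finite_Shannon_entropy_general φ hexp hosc ν hint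
end
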